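/- Let (A,B,C) be an LR triple on V with tridiagonal space 𝒳, and let {E'_i}, {E''_i} be the idempotent sequences of the (B,C)- and (C,A)-decompositions of V. Then the subspaces 𝒳E'_d = {XE'_d : X ∈ 𝒳}, E''_d𝒳 = {E''_dX : X ∈ 𝒳}, and 𝒳AE'_d = {XAE'_d : X ∈ 𝒳} of End(V) satisfy dim(𝒳E'_d) ≤ 2, dim(E''_d𝒳) ≤ 2, and dim(𝒳AE'_d) ≤ 3. -/

import Mathlib

/-- A decomposition of `V` of diameter `d`: a sequence of one-dimensional subspaces
`sub 0, …, sub d` whose (direct) sum is `V`; by convention `sub i = ⊥` for `i > d`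
(encoding `V_{-1} = 0` and `V_{d+1} = 0`). -/
structure LRDecomp (F : Type*) [Field F] (V : Type*) [AddCommGroup V] [Module F V]
    (d : ℕ) where
  sub : ℕ → Submodule F V
  finrank_eq_one : ∀ i ≤ d, Module.finrank F (sub i) = 1
  eq_bot_of_gt : ∀ i, d < i → sub i = ⊥
  isInternal : DirectSum.IsInternal fun i : Fin (d + 1) => sub i.val

variable {F : Type*} [Field F] {V : Type*} [AddCommGroup V] [Module F V]

/-- `A` lowers the decomposition: `A V_i = V_{i-1}` for `0 ≤ i ≤ d` (with `V_{-1} = 0`). -/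
def Lowers {d : ℕ} (A : Module.End F V) (D : LRDecomp F V d) : Prop :=
  Submodule.map A (D.sub 0) = ⊥ ∧ ∀ i < d, Submodule.map A (D.sub (i + 1)) = D.sub i

/-- `B` raises the decomposition: `B V_i = V_{i+1}` for `0 ≤ i ≤ d` (with `V_{d+1} = 0`). -/
def Raises {d : ℕ} (B : Module.End F V) (D : LRDecomp F V d) : Prop :=
  ∀ i ≤ d, Submodule.map B (D.sub i) = D.sub (i + 1)

/-- `D` is the (A,B)-decomposition: it is lowered by `A` and raised by `B`. -/
def IsLRPairWith {d : ℕ} (A B : Module.End F V) (D : LRDecomp F V d) : Prop :=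
  Lowers A D ∧ Raises B D

/-- `(A,B,C)` is an LR triple of diameter `d`. -/
def IsLRTriple (d : ℕ) (A B C : Module.End F V) : Prop :=
  (∃ D : LRDecomp F V d, IsLRPairWith A B D) ∧
  (∃ D : LRDecomp F V d, IsLRPairWith B C D) ∧
  (∃ D : LRDecomp F V d, IsLRPairWith C A D)

/-- `X` is tridiagonal with respect to the decomposition `D`:
`X V_i ⊆ V_{i-1} + V_i + V_{i+1}` (note `V_{0-1} ⊔ V_0 = V_0` makes `ℕ`-subtraction correct). -/
def IsTridiagonal {d : ℕ} (X : Module.End F V) (D : LRDecomp F V d) : Prop :=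
  ∀ i, ∀ v ∈ D.sub i, X v ∈ D.sub (i - 1) ⊔ D.sub i ⊔ D.sub (i + 1)

/-- The tridiagonal space of the LR triple with decompositions `D₁, D₂, D₃`. -/
def tridiagSpace {d : ℕ} (D₁ D₂ D₃ : LRDecomp F V d) : Submodule F (Module.End F V) where
  carrier := {X | IsTridiagonal X D₁ ∧ IsTridiagonal X D₂ ∧ IsTridiagonal X D₃}
  add_mem' := by
    rintro X Y ⟨hX1, hX2, hX3⟩ ⟨hY1, hY2, hY3⟩
    exact ⟨fun i v hv => by simpa using add_mem (hX1 i v hv) (hY1 i v hv),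
           fun i v hv => by simpa using add_mem (hX2 i v hv) (hY2 i v hv),
           fun i v hv => by simpa using add_mem (hX3 i v hv) (hY3 i v hv)⟩
  zero_mem' :=
    ⟨fun i v _ => by simp,
     fun i v _ => by simp,
     fun i v _ => by simp⟩
  smul_mem' := by
    rintro c X ⟨hX1, hX2, hX3⟩
    exact ⟨fun i v hv => by simpa using Submodule.smul_mem _ c (hX1 i v hv),
           fun i v hv => by simpa using Submodule.smul_mem _ c (hX2 i v hv),
           fun i v hv => by simpa using Submodule.smul_mem _ c (hX3 i v hv)⟩

/-- `E` is the idempotent sequence of the decomposition `D`: each `E i` acts as the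
identity on `sub i` and as zero on `sub j` for `j ≠ i`. -/
def IsIdemSeq {d : ℕ} (D : LRDecomp F V d) (E : ℕ → Module.End F V) : Prop :=
  ∀ i, (∀ v ∈ D.sub i, E i v = v) ∧ ∀ j, j ≠ i → ∀ v ∈ D.sub j, E i v = 0

/-- Bipartite: all trace data `a_i = tr(C E_i)`, `a'_i = tr(A E'_i)`, `a''_i = tr(B E''_i)`
vanish, where `E, E', E''` are the idempotent data of the triple `(A,B,C)`. -/
def IsBipartite (d : ℕ) (A B C : Module.End F V)
    (E E' E'' : ℕ → Module.End F V) : Prop :=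
  ∀ i ≤ d, LinearMap.trace F V (C * E i) = 0 ∧
    LinearMap.trace F V (A * E' i) = 0 ∧ LinearMap.trace F V (B * E'' i) = 0

/-- An LR pair `(A,B)` has `q`-Weyl type. -/
def IsQWeylPair (q : F) (A B : Module.End F V) : Prop :=
  q ≠ 0 ∧ q ^ 2 ≠ 1 ∧ q • (A * B) - q⁻¹ • (B * A) = (q - q⁻¹) • (1 : Module.End F V)

/-- An LR triple `(A,B,C)` has `q`-Weyl type. -/
def IsQWeylTriple (q : F) (A B C : Module.End F V) : Prop :=
  IsQWeylPair q A B ∧ IsQWeylPair q B C ∧ IsQWeylPair q C A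

/-- `v` is an `(A,B)`-basis, relative to the `(A,B)`-decomposition `D`:
`v i ∈ sub i` is nonzero and `A v_i = v_{i-1}`. -/
def IsLRBasisFor {d : ℕ} (A : Module.End F V) (D : LRDecomp F V d) (v : ℕ → V) : Prop :=
  (∀ i ≤ d, v i ∈ D.sub i ∧ v i ≠ 0) ∧ ∀ i, 1 ≤ i → i ≤ d → A (v i) = v (i - 1)

/-- `v` is a `(B,A)`-style basis relative to the `(A,B)`-decomposition `D` of the
reversed pair: `v i ∈ sub (d-i)` is nonzero and the lowering map sends `v i ↦ v (i-1)`.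
(Used for `(C,B)`-bases relative to the `(B,C)`-decomposition, etc.) -/
def IsLRBasisRev {d : ℕ} (A : Module.End F V) (D : LRDecomp F V d) (v : ℕ → V) : Prop :=
  (∀ i ≤ d, v i ∈ D.sub (d - i) ∧ v i ≠ 0) ∧ ∀ i, 1 ≤ i → i ≤ d → A (v i) = v (i - 1)

/-- The transition matrix from the basis `u` to the basis `w` is upper triangular
Toeplitz with parameters `α`: `w j = ∑_{i ≤ j} α_{j-i} u_i`. -/
def IsToeplitzTransition (d : ℕ) (u w : ℕ → V) (α : ℕ → F) : Prop :=
  ∀ j ≤ d, w j = ∑ i ∈ Finset.range (j + 1), α (j - i) • u i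

/-- `φ` is the parameter sequence of the LR pair `(A,B)` with `(A,B)`-decomposition `D`:
`BA` acts on `V_i` as `φ i` for `1 ≤ i ≤ d`, with conventions `φ 0 = 0 = φ (d+1)`. -/
def IsParamSeq {d : ℕ} (A B : Module.End F V) (D : LRDecomp F V d) (φ : ℕ → F) : Prop :=
  φ 0 = 0 ∧ φ (d + 1) = 0 ∧ ∀ i, 1 ≤ i → i ≤ d → ∀ v ∈ D.sub i, B (A v) = φ i • v

/-! Each of the three spaces consists of maps `Y` that are determined by their restriction to a
small sum `U` of summands of a decomposition and send `U` into a small sum `W` of summands, so its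
dimension is at most `dim U · dim W`. Tridiagonality gives `U = V'_d`, `W = V'_{d-1} + V'_d` for
`𝒳E'_d`, and `U = V''_{d-1} + V''_d`, `W = V''_d` for `E''_d𝒳`. For `𝒳AE'_d` one needs
`A V'_d ⊆ V'_{d-1} + V'_d`: the spaces `V'_d` and `V''_0` both equal the line `ker C`, so
`A V'_d = V''_1 ⊆ ker C²`, and `ker C² = V'_{d-1} + V'_d` because `dim ker C² ≤ 2 dim ker C`. -/

open Module LinearMap

theorem finrank_ker_mul_self_le [FiniteDimensional F V] (f : Module.End F V) :
    finrank F (ker (f * f)) ≤ 2 * finrank F (ker f) := by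
  set K := ker (f * f)
  let g : K →ₗ[F] V := f.domRestrict K
  have hrange : range g ≤ ker f := by
    rintro _ ⟨x, rfl⟩
    exact x.2
  have hker : finrank F (ker g) ≤ finrank F (ker f) :=
    finrank_le_finrank_of_injective (f := K.subtype.restrict (p := ker g) (q := ker f)
      fun x hx => hx) fun x y hxy => Subtype.ext (Subtype.ext (congr_arg Subtype.val hxy :))
  have := finrank_range_add_finrank_ker g
  have := Submodule.finrank_mono hrange
  omega

theorem finrank_le_mul_of_restrict_injective [FiniteDimensional F V]
    (S : Submodule F (Module.End F V)) {U W : Submodule F V}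
    (hmaps : ∀ Y ∈ S, ∀ u ∈ U, Y u ∈ W) (hdet : ∀ Y ∈ S, (∀ u ∈ U, Y u = 0) → Y = 0) :
    finrank F S ≤ finrank F U * finrank F W := by
  let restrict : S →ₗ[F] (U →ₗ[F] W) :=
    { toFun := fun Y => (Y : Module.End F V).restrict (hmaps Y Y.2)
      map_add' := fun _ _ => rfl
      map_smul' := fun _ _ => rfl }
  have hinj : Function.Injective restrict := by
    rw [← ker_eq_bot, Submodule.eq_bot_iff]
    intro Y hY
    exact Subtype.ext <| hdet Y Y.2 fun u hu =>
      congr_arg Subtype.val (LinearMap.congr_fun hY ⟨u, hu⟩)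
  simpa [finrank_linearMap] using finrank_le_finrank_of_injective hinj

namespace LRDecomp

variable {d : ℕ} (D : LRDecomp F V d)

theorem finrank_sub_le_one (i : ℕ) : finrank F (D.sub i) ≤ 1 := by
  rcases le_or_gt i d with hi | hi
  · exact (D.finrank_eq_one i hi).le
  · rw [D.eq_bot_of_gt i hi, finrank_bot]
    exact zero_le_one

theorem finrank_sup_sub_le_two [FiniteDimensional F V] (i j : ℕ) :
    finrank F ↥(D.sub i ⊔ D.sub j) ≤ 2 :=
  (Submodule.finrank_add_le_finrank_add_finrank _ _).trans
    (add_le_add (D.finrank_sub_le_one i) (D.finrank_sub_le_one j))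

theorem finrank_sup_sub_eq_two [FiniteDimensional F V] {i j : ℕ} (hi : i ≤ d) (hj : j ≤ d)
    (hij : i ≠ j) : finrank F ↥(D.sub i ⊔ D.sub j) = 2 := by
  have hdisj : Disjoint (D.sub i) (D.sub j) := by
    simpa [Function.onFun] using D.isInternal.submodule_iSupIndep.pairwiseDisjoint
      (i := (⟨i, by omega⟩ : Fin (d + 1))) (j := ⟨j, by omega⟩) (by simpa using hij)
  have := Submodule.finrank_sup_add_finrank_inf_eq (D.sub i) (D.sub j)
  rw [hdisj.eq_bot, finrank_bot, D.finrank_eq_one i hi, D.finrank_eq_one j hj] at this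
  omega

theorem eq_zero_of_le_ker {Y : Module.End F V} (h : ∀ i ≤ d, D.sub i ≤ ker Y) : Y = 0 := by
  rw [← ker_eq_top, eq_top_iff, ← D.isInternal.submodule_iSup_eq_top]
  exact iSup_le fun i => h i (Nat.le_of_lt_succ i.isLt)

end LRDecomp

section

variable {d : ℕ} {D : LRDecomp F V d} {C : Module.End F V}

theorem Lowers.map_sub_succ_le (hC : Lowers C D) (i : ℕ) : (D.sub (i + 1)).map C ≤ D.sub i := by
  rcases lt_or_ge i d with hi | hi
  · exact (hC.2 i hi).le
  · simp [D.eq_bot_of_gt (i + 1) (by omega)]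

theorem Lowers.range_sup_sub_last_eq_top (hC : Lowers C D) : range C ⊔ D.sub d = ⊤ := by
  rw [eq_top_iff, ← D.isInternal.submodule_iSup_eq_top]
  refine iSup_le fun i => ?_
  rcases (Nat.lt_succ_iff.mp i.isLt).lt_or_eq with hi | hi
  · rw [← hC.2 i hi]
    exact le_sup_of_le_left map_le_range
  · rw [hi]
    exact le_sup_right

theorem Lowers.ker_eq [FiniteDimensional F V] (hdim : finrank F V = d + 1) (hC : Lowers C D) :
    ker C = D.sub 0 := by
  have hsub : D.sub 0 ≤ ker C := by
    rw [le_ker_iff_map]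
    exact hC.1
  have hcover := Submodule.finrank_add_le_finrank_add_finrank (range C) (D.sub d)
  rw [hC.range_sup_sub_last_eq_top, finrank_top, hdim, D.finrank_eq_one d le_rfl] at hcover
  have := finrank_range_add_finrank_ker C
  refine (Submodule.eq_of_le_of_finrank_le hsub ?_).symm
  rw [D.finrank_eq_one 0 (Nat.zero_le d)]
  omega

theorem Raises.map_sub_le (hC : Raises C D) (i : ℕ) : (D.sub i).map C ≤ D.sub (i + 1) := by
  rcases le_or_gt i d with hi | hi
  · exact (hC i hi).le
  · simp [D.eq_bot_of_gt i hi]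

theorem Raises.sub_last_le_ker (hC : Raises C D) : D.sub d ≤ ker C := by
  rw [le_ker_iff_map, ← le_bot_iff, ← D.eq_bot_of_gt (d + 1) (by omega)]
  exact hC.map_sub_le d

theorem Raises.sub_pred_sup_sub_last_le_ker (hC : Raises C D) :
    D.sub (d - 1) ⊔ D.sub d ≤ ker (C * C) := by
  have hlast := hC.sub_last_le_ker
  have hC_pred : (D.sub (d - 1)).map C ≤ D.sub d := by
    rcases Nat.eq_zero_or_pos d with rfl | hd
    · exact (hC.map_sub_le 0).trans (by simp [D.eq_bot_of_gt 1 one_pos])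
    · simpa [Nat.sub_add_cancel hd] using hC.map_sub_le (d - 1)
  refine sup_le (fun v hv => ?_) fun v hv => ?_
  · simpa [Module.End.mul_apply] using hlast (hC_pred (Submodule.mem_map_of_mem hv))
  · simp [Module.End.mul_apply, mem_ker.mp (hlast hv)]

theorem Lowers.sub_one_le_ker_mul_self (hC : Lowers C D) : D.sub 1 ≤ ker (C * C) := by
  intro v hv
  have hCv : C v ∈ D.sub 0 := hC.map_sub_succ_le 0 (Submodule.mem_map_of_mem hv)
  have hCCv : C (C v) ∈ (D.sub 0).map C := Submodule.mem_map_of_mem hCv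
  rw [hC.1] at hCCv
  simpa using hCCv

end

theorem IsLRPairWith.apply_mem_sub_pred_sup_sub_last [FiniteDimensional F V] {d : ℕ}
    (hdim : finrank F V = d + 1) {D' D'' : LRDecomp F V d} {A C : Module.End F V}
    (hC : Raises C D') (hCA : IsLRPairWith C A D'') {v : V} (hv : v ∈ D'.sub d) :
    A v ∈ D'.sub (d - 1) ⊔ D'.sub d := by
  have hv₀ : v ∈ D''.sub 0 := hCA.1.ker_eq hdim ▸ hC.sub_last_le_ker hv
  have hAv : A v ∈ D''.sub 1 := hCA.2 0 d.zero_le ▸ Submodule.mem_map_of_mem hv₀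
  suffices ker (C * C) ≤ D'.sub (d - 1) ⊔ D'.sub d from this (hCA.1.sub_one_le_ker_mul_self hAv)
  rcases Nat.eq_zero_or_pos d with rfl | hd
  · have htop : D'.sub 0 = ⊤ :=
      Submodule.eq_top_of_finrank_eq (by rw [D'.finrank_eq_one 0 le_rfl, hdim])
    simp [htop]
  · refine (Submodule.eq_of_le_of_finrank_le hC.sub_pred_sup_sub_last_le_ker ?_).ge
    have hker₂ := finrank_ker_mul_self_le C
    rw [hCA.1.ker_eq hdim, D''.finrank_eq_one 0 d.zero_le] at hker₂
    rw [D'.finrank_sup_sub_eq_two (Nat.sub_le d 1) le_rfl (by omega)]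
    exact hker₂

section

variable {d : ℕ} {D : LRDecomp F V d}

theorem IsIdemSeq.apply_mem {E : ℕ → Module.End F V} (hE : IsIdemSeq D E) (i : ℕ) (z : V) :
    E i z ∈ D.sub i := by
  suffices range (E i) ≤ D.sub i from this (mem_range_self _ z)
  rw [range_eq_map, ← D.isInternal.submodule_iSup_eq_top, Submodule.map_iSup]
  refine iSup_le fun j => ?_
  rintro _ ⟨y, hy, rfl⟩
  rcases eq_or_ne (j : ℕ) i with hj | hj
  · rw [(hE i).1 y (hj ▸ hy)]
    exact hj ▸ hy
  · rw [(hE i).2 j hj y hy]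
    exact zero_mem _

theorem IsTridiagonal.apply_mem_of_mem_last {X : Module.End F V} (hX : IsTridiagonal X D)
    {v : V} (hv : v ∈ D.sub d) : X v ∈ D.sub (d - 1) ⊔ D.sub d := by
  simpa [D.eq_bot_of_gt (d + 1) (by omega)] using hX d v hv

theorem IsTridiagonal.apply_mem_of_mem_pred {X : Module.End F V} (hX : IsTridiagonal X D)
    {v : V} (hv : v ∈ D.sub (d - 1)) : X v ∈ D.sub (d - 2) ⊔ D.sub (d - 1) ⊔ D.sub d := by
  rcases Nat.eq_zero_or_pos d with rfl | hd
  · simpa [D.eq_bot_of_gt 1 one_pos] using hX 0 v hv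
  · simpa [Nat.sub_add_cancel hd, Nat.sub_sub] using hX (d - 1) v hv

variable [FiniteDimensional F V] {S : Submodule F (Module.End F V)}

theorem finrank_map_mulRight_le_of_le_ker {R : Module.End F V} {W : Submodule F V}
    (hR : ∀ i ≠ d, D.sub i ≤ ker R) (hW : ∀ X ∈ S, ∀ u ∈ D.sub d, X (R u) ∈ W) :
    finrank F (S.map (mulRight F R)) ≤ finrank F W := by
  have hbound := finrank_le_mul_of_restrict_injective (S.map (mulRight F R)) (U := D.sub d)
    (W := W) (by rintro _ ⟨X, hX, rfl⟩ u hu; exact hW X hX u hu) <| by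
      rintro _ ⟨X, -, rfl⟩ hU
      refine D.eq_zero_of_le_ker fun i _ v hv => ?_
      rcases eq_or_ne i d with rfl | hi
      · exact hU v hv
      · simp [mem_ker.mp (hR i hi hv)]
  rw [D.finrank_eq_one d le_rfl, one_mul] at hbound
  exact hbound

theorem finrank_map_mulRight_idem_last_le {E : ℕ → Module.End F V} (hE : IsIdemSeq D E)
    (hS : ∀ X ∈ S, IsTridiagonal X D) : finrank F (S.map (mulRight F (E d))) ≤ 2 :=
  (finrank_map_mulRight_le_of_le_ker (fun i hi v hv => (hE d).2 i hi v hv) fun X hX u hu => by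
    simpa [(hE d).1 u hu] using (hS X hX).apply_mem_of_mem_last hu).trans
    (D.finrank_sup_sub_le_two _ _)

theorem finrank_map_mulRight_mul_idem_last_le {E : ℕ → Module.End F V} (hE : IsIdemSeq D E)
    (hS : ∀ X ∈ S, IsTridiagonal X D) {A : Module.End F V}
    (hA : ∀ v ∈ D.sub d, A v ∈ D.sub (d - 1) ⊔ D.sub d) :
    finrank F (S.map (mulRight F (A * E d))) ≤ 3 := by
  refine (finrank_map_mulRight_le_of_le_ker (D := D)
    (W := D.sub (d - 2) ⊔ D.sub (d - 1) ⊔ D.sub d)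
    (fun i hi v hv => by simp [(hE d).2 i hi v hv]) fun X hX u hu => ?_).trans ?_
  · obtain ⟨p, hp, q, hq, hpq⟩ := Submodule.mem_sup.mp (hA u hu)
    rw [Module.End.mul_apply, (hE d).1 u hu, ← hpq, map_add]
    have hle : D.sub (d - 1) ⊔ D.sub d ≤ D.sub (d - 2) ⊔ D.sub (d - 1) ⊔ D.sub d :=
      sup_le_sup_right le_sup_right _
    exact add_mem ((hS X hX).apply_mem_of_mem_pred hp)
      (hle ((hS X hX).apply_mem_of_mem_last hq))
  · have := Submodule.finrank_add_le_finrank_add_finrank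
      (D.sub (d - 2) ⊔ D.sub (d - 1)) (D.sub d)
    have := D.finrank_sup_sub_le_two (d - 2) (d - 1)
    have := D.finrank_sub_le_one d
    omega

theorem finrank_map_mulLeft_idem_last_le {E : ℕ → Module.End F V} (hE : IsIdemSeq D E)
    (hS : ∀ X ∈ S, IsTridiagonal X D) : finrank F (S.map (mulLeft F (E d))) ≤ 2 := by
  have hbound := finrank_le_mul_of_restrict_injective (S.map (mulLeft F (E d)))
    (U := D.sub (d - 1) ⊔ D.sub d) (W := D.sub d)
    (by rintro _ ⟨X, -, rfl⟩ u -; exact hE.apply_mem d (X u)) <| by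
      rintro _ ⟨X, hX, rfl⟩ hU
      refine D.eq_zero_of_le_ker fun i _ v hv => ?_
      by_cases hi : d ≤ i + 1
      · obtain rfl | rfl : i = d - 1 ∨ i = d := by omega
        exacts [hU v (Submodule.mem_sup_left hv), hU v (Submodule.mem_sup_right hv)]
      · have hkill : ∀ j ≠ d, D.sub j ≤ ker (E d) := fun j hj w hw => (hE d).2 j hj w hw
        have hnbhd : D.sub (i - 1) ⊔ D.sub i ⊔ D.sub (i + 1) ≤ ker (E d) :=
          sup_le (sup_le (hkill _ (by omega)) (hkill _ (by omega))) (hkill _ (by omega))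
        exact hnbhd ((hS X hX) i v hv)
  exact hbound.trans (Nat.mul_le_mul (D.finrank_sup_sub_le_two _ _) (D.finrank_sub_le_one d))

end

theorem stmt8_general
    {F : Type*} [Field F] {V : Type*} [AddCommGroup V] [Module F V]
    [FiniteDimensional F V] {d : ℕ} (hdim : Module.finrank F V = d + 1)
    (A B C : Module.End F V) (DAB DBC DCA : LRDecomp F V d)
    (hBC : IsLRPairWith B C DBC) (hCA : IsLRPairWith C A DCA)
    (E' E'' : ℕ → Module.End F V)
    (hE' : IsIdemSeq DBC E') (hE'' : IsIdemSeq DCA E'') :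
    Module.finrank F (Submodule.map (LinearMap.mulRight F (E' d)) (tridiagSpace DAB DBC DCA)) ≤ 2 ∧
    Module.finrank F (Submodule.map (LinearMap.mulLeft F (E'' d)) (tridiagSpace DAB DBC DCA)) ≤ 2 ∧
    Module.finrank F (Submodule.map (LinearMap.mulRight F (A * E' d)) (tridiagSpace DAB DBC DCA)) ≤ 3 := by
  have hX' : ∀ X ∈ tridiagSpace DAB DBC DCA, IsTridiagonal X DBC := fun _ hX => hX.2.1
  have hX'' : ∀ X ∈ tridiagSpace DAB DBC DCA, IsTridiagonal X DCA := fun _ hX => hX.2.2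
  exact ⟨finrank_map_mulRight_idem_last_le hE' hX', finrank_map_mulLeft_idem_last_le hE'' hX'',
    finrank_map_mulRight_mul_idem_last_le hE' hX' fun _ hv =>
      hCA.apply_mem_sub_pred_sup_sub_last hdim hBC.2 hv⟩

theorem stmt8
    {F : Type*} [Field F] {V : Type*} [AddCommGroup V] [Module F V]
    [FiniteDimensional F V] {d : ℕ} (hdim : Module.finrank F V = d + 1)
    (A B C : Module.End F V) (DAB DBC DCA : LRDecomp F V d)
    (hAB : IsLRPairWith A B DAB) (hBC : IsLRPairWith B C DBC) (hCA : IsLRPairWith C A DCA)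
    (E' E'' : ℕ → Module.End F V)
    (hE' : IsIdemSeq DBC E') (hE'' : IsIdemSeq DCA E'') :
    Module.finrank F (Submodule.map (LinearMap.mulRight F (E' d)) (tridiagSpace DAB DBC DCA)) ≤ 2 ∧
    Module.finrank F (Submodule.map (LinearMap.mulLeft F (E'' d)) (tridiagSpace DAB DBC DCA)) ≤ 2 ∧
    Module.finrank F (Submodule.map (LinearMap.mulRight F (A * E' d)) (tridiagSpace DAB DBC DCA)) ≤ 3 :=
  stmt8_general hdim A B C DAB DBC DCA hBC hCA E' E'' hE' hE''
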